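/- Let ρ > 0 and let Σ ∈ ℝ^{d×d} be symmetric positive definite. Every symmetric positive semidefinite matrix S ∈ ℝ^{d×d} with B(S) ≤ ρ² satisfies Tr(S) ≤ (ρ + √(Tr Σ))², and consequently S ⪯ (ρ + √(Tr Σ))²·I_d. -/

import Mathlib

/-!
With `N = (Σ^{1/2} S Σ^{1/2})^{1/2}`, Cauchy–Schwarz for the Frobenius pairing of `N Σ^{-1/2}`
and `Σ^{1/2}` gives `Tr N ≤ √(Tr S) √(Tr Σ)`, hence `B(S) ≥ (√(Tr S) - √(Tr Σ))²`, so
`√(Tr S) ≤ ρ + √(Tr Σ)`. The Loewner bound follows because every eigenvalue of a positive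
semidefinite matrix is at most its trace.
-/

open Matrix

-- `msqrt M` is the unique symmetric PSD square root of a symmetric PSD matrix `M` (else `0`).
open Classical in
noncomputable def msqrt {ι : Type*} [Fintype ι] [DecidableEq ι] (M : Matrix ι ι ℝ) : Matrix ι ι ℝ :=
  if h : M.PosSemidef then
    h.1.eigenvectorUnitary.1 * diagonal ((↑) ∘ (√·) ∘ h.1.eigenvalues) *
      (star h.1.eigenvectorUnitary : Matrix ι ι ℝ)
  else 0

/-- `Bdist Sg S = Tr(S + Σ − 2(Σ^{1/2} S Σ^{1/2})^{1/2})`. -/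
noncomputable def Bdist {ι : Type*} [Fintype ι] [DecidableEq ι] (Sg S : Matrix ι ι ℝ) : ℝ :=
  (S + Sg - (2:ℝ) • msqrt (msqrt Sg * S * msqrt Sg)).trace

open scoped MatrixOrder

variable {ι : Type*} [Fintype ι]

lemma Matrix.trace_mul_transpose_sq_le (A B : Matrix ι ι ℝ) :
    (A * Bᵀ).trace ^ 2 ≤ (A * Aᵀ).trace * (B * Bᵀ).trace := by
  have hsum (P Q : Matrix ι ι ℝ) : (P * Qᵀ).trace = ∑ p : ι × ι, P p.1 p.2 * Q p.1 p.2 := by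
    simp [trace, mul_apply, Fintype.sum_prod_type]
  simp only [hsum, ← sq]
  exact Finset.sum_mul_sq_le_sq_mul_sq _ _ _

variable [DecidableEq ι]

lemma msqrt_eq_of_posSemidef {M : Matrix ι ι ℝ} (hM : M.PosSemidef) :
    msqrt M = (hM.1.eigenvectorUnitary : Matrix ι ι ℝ) *
      diagonal ((↑) ∘ (√·) ∘ hM.1.eigenvalues) * (hM.1.eigenvectorUnitary : Matrix ι ι ℝ)ᴴ := by
  rw [msqrt, dif_pos hM]
  rfl

lemma posSemidef_msqrt {M : Matrix ι ι ℝ} (hM : M.PosSemidef) : (msqrt M).PosSemidef := by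
  rw [msqrt_eq_of_posSemidef hM]
  refine PosSemidef.mul_mul_conjTranspose_same ?_ _
  rw [posSemidef_diagonal_iff]
  intro i
  simp

lemma msqrt_mul_self {M : Matrix ι ι ℝ} (hM : M.PosSemidef) : msqrt M * msqrt M = M := by
  set U : Matrix ι ι ℝ := (hM.1.eigenvectorUnitary : Matrix ι ι ℝ)
  have hUU : Uᴴ * U = 1 := Unitary.coe_star_mul_self hM.1.eigenvectorUnitary
  have hDD : diagonal (((↑) ∘ (√·) ∘ hM.1.eigenvalues) : ι → ℝ) *
      diagonal ((↑) ∘ (√·) ∘ hM.1.eigenvalues) = diagonal (RCLike.ofReal ∘ hM.1.eigenvalues) := by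
    rw [diagonal_mul_diagonal]
    congr 1
    funext i
    simp [Real.mul_self_sqrt (hM.eigenvalues_nonneg i)]
  conv_rhs => rw [hM.1.spectral_theorem, Unitary.conjStarAlgAut_apply]
  rw [msqrt_eq_of_posSemidef hM]
  simp only [Matrix.mul_assoc]
  rw [← Matrix.mul_assoc Uᴴ U, hUU, Matrix.one_mul, ← Matrix.mul_assoc (diagonal _), hDD]
  rfl

lemma Matrix.trace_msqrt_conj_sq_le {Sg S : Matrix ι ι ℝ} (hSg : Sg.PosDef) (hS : S.PosSemidef) :
    (msqrt (msqrt Sg * S * msqrt Sg)).trace ^ 2 ≤ S.trace * Sg.trace := by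
  set R := msqrt Sg
  have hR : R.PosSemidef := posSemidef_msqrt hSg.posSemidef
  have hRR : R * R = Sg := msqrt_mul_self hSg.posSemidef
  have hRt : Rᵀ = R := hR.1
  have hRS : (R * S * R).PosSemidef := by
    simpa only [hR.1.eq] using hS.mul_mul_conjTranspose_same R
  set N := msqrt (R * S * R)
  have hNt : Nᵀ = N := (posSemidef_msqrt hRS).1
  have hNN : N * N = R * S * R := msqrt_mul_self hRS
  have hdet : IsUnit R.det := by
    rw [isUnit_iff_ne_zero, ← mul_self_ne_zero, ← det_mul, hRR]
    exact hSg.det_pos.ne'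
  have hN : (N * R⁻¹ * Rᵀ).trace = N.trace := by
    rw [hRt, Matrix.mul_assoc, nonsing_inv_mul R hdet, Matrix.mul_one]
  have hNR : (N * R⁻¹ * (N * R⁻¹)ᵀ).trace = S.trace := by
    rw [transpose_mul, transpose_nonsing_inv, hNt, hRt, ← Matrix.mul_assoc, trace_mul_comm,
      ← Matrix.mul_assoc, ← Matrix.mul_assoc N N, hNN, Matrix.mul_assoc (R * S) R,
      mul_nonsing_inv R hdet, Matrix.mul_one, trace_mul_comm, ← Matrix.mul_assoc,
      nonsing_inv_mul R hdet, Matrix.one_mul]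
  have hRR' : (R * Rᵀ).trace = Sg.trace := by rw [hRt, hRR]
  simpa only [hN, hNR, hRR'] using trace_mul_transpose_sq_le (N * R⁻¹) R

lemma Matrix.PosSemidef.posSemidef_smul_one_sub_of_trace_le {S : Matrix ι ι ℝ} (hS : S.PosSemidef)
    {c : ℝ} (hc : S.trace ≤ c) : (c • (1 : Matrix ι ι ℝ) - S).PosSemidef := by
  rw [← Matrix.le_iff, ← Algebra.algebraMap_eq_smul_one]
  refine le_algebraMap_of_spectrum_le (fun x hx => ?_) hS.1.isSelfAdjoint
  rw [hS.1.spectrum_real_eq_range_eigenvalues] at hx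
  obtain ⟨i, rfl⟩ := hx
  refine le_trans ?_ hc
  rw [hS.1.trace_eq_sum_eigenvalues]
  simpa using Finset.single_le_sum (fun j _ => hS.eigenvalues_nonneg j) (Finset.mem_univ i)

lemma sq_sqrt_trace_sub_sqrt_trace_le_Bdist {Sg S : Matrix ι ι ℝ} (hSg : Sg.PosDef)
    (hS : S.PosSemidef) : (√S.trace - √Sg.trace) ^ 2 ≤ Bdist Sg S := by
  have hN : (msqrt (msqrt Sg * S * msqrt Sg)).trace ≤ √S.trace * √Sg.trace := by
    rw [← Real.sqrt_mul hS.trace_nonneg]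
    exact Real.le_sqrt_of_sq_le (trace_msqrt_conj_sq_le hSg hS)
  rw [Bdist, trace_sub, trace_add, trace_smul, smul_eq_mul, sub_sq, mul_assoc,
    Real.sq_sqrt hS.trace_nonneg, Real.sq_sqrt hSg.posSemidef.trace_nonneg]
  linarith

lemma trace_le_of_Bdist_le {Sg S : Matrix ι ι ℝ} (hSg : Sg.PosDef) (hS : S.PosSemidef)
    {ρ : ℝ} (hρ : 0 ≤ ρ) (hB : Bdist Sg S ≤ ρ ^ 2) : S.trace ≤ (ρ + √Sg.trace) ^ 2 := by
  have hdiff : √S.trace - √Sg.trace ≤ ρ :=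
    (abs_le_of_sq_le_sq' ((sq_sqrt_trace_sub_sqrt_trace_le_Bdist hSg hS).trans hB) hρ).2
  calc S.trace = √S.trace ^ 2 := (Real.sq_sqrt hS.trace_nonneg).symm
    _ ≤ (ρ + √Sg.trace) ^ 2 := pow_le_pow_left₀ (Real.sqrt_nonneg _) (by linarith) 2

theorem stmt9_general {d : ℕ} (ρ : ℝ) (hρ : 0 < ρ) (Sg : Matrix (Fin d) (Fin d) ℝ)
    (hSg : Sg.PosDef) (S : Matrix (Fin d) (Fin d) ℝ) (hS : S.PosSemidef)
    (hB : Bdist Sg S ≤ ρ ^ 2) :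
    S.trace ≤ (ρ + Real.sqrt Sg.trace) ^ 2 ∧
      ((ρ + Real.sqrt Sg.trace) ^ 2 • (1 : Matrix (Fin d) (Fin d) ℝ) - S).PosSemidef := by
  have htr := trace_le_of_Bdist_le hSg hS hρ.le hB
  exact ⟨htr, hS.posSemidef_smul_one_sub_of_trace_le htr⟩

/-- Every symmetric PSD `S` with `B(S) ≤ ρ²` satisfies `Tr S ≤ (ρ + √(Tr Σ))²`, and
consequently `S ⪯ (ρ + √(Tr Σ))² I`. -/
theorem stmt9 {d : ℕ} [NeZero d] (ρ : ℝ) (hρ : 0 < ρ) (Sg : Matrix (Fin d) (Fin d) ℝ)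
    (hSg : Sg.PosDef) (S : Matrix (Fin d) (Fin d) ℝ) (hS : S.PosSemidef)
    (hB : Bdist Sg S ≤ ρ ^ 2) :
    S.trace ≤ (ρ + Real.sqrt Sg.trace) ^ 2 ∧
      ((ρ + Real.sqrt Sg.trace) ^ 2 • (1 : Matrix (Fin d) (Fin d) ℝ) - S).PosSemidef :=
  stmt9_general ρ hρ Sg hSg S hS hB
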